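/- Let n ≥ 2, Ω ⊂ ℝⁿ a bounded open set, T > 0 and ω ∈ S^{n−1}. Then there exist c > 0 and λ₀ > 0, independent of w and λ, such that for all λ > λ₀ and all w ∈ C²([0,T];C_c^∞(Ω)) satisfying w(0,x) = ∂_t w(0,x) = w(T,x) = 0 for all x ∈ ℝⁿ: ∫_Q |□w(t,x) + 2λ(∂_t w(t,x) + ω·∇_x w(t,x))|² dx dt ≥ ∫_Q |□w(t,x)|² dx dt + c λ² ∫_Q |w(t,x)|² dx dt. -/

import Mathlib

/-!
Write `L = ∂ₜ + ω·∇ₓ` and expand the square: the right-hand side is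
`∫ |□w|² + 4λ Re ∫ □w · conj (Lw) + 4λ² ∫ |Lw|²`. Every term `Re (∂ₐ²w · conj (∂_b w))` of the
cross term equals the divergence `∂ₐ Re (∂ₐw · conj (∂_b w)) - ½ ∂_b |∂ₐw|²`, so over the strip
`(0,T) × ℝⁿ` only the time boundary contributes, and the boundary conditions leave
`Re ∫ □w · conj (Lw) = ½ ∫ |∂ₜw(T,x)|² dx ≥ 0`. Likewise `L (t |w|²) = |w|² + 2t Re (w · conj (Lw))`
integrates to `0` since `w(T,·) = 0`; with `2t |w| |Lw| ≤ |w|²/2 + 2T² |Lw|²` on the strip this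
gives `∫ |w|² ≤ 4T² ∫ |Lw|²`. Hence `c = 1/T²` works, for any `λ₀ > 0`.
-/

open MeasureTheory Real Set

noncomputable section

variable {n : ℕ}

/-- first time derivative ∂ₜv -/
def pt (v : ℝ × (Fin n → ℝ) → ℂ) (X : ℝ × (Fin n → ℝ)) : ℂ :=
  deriv (fun s => v (s, X.2)) X.1

/-- second time derivative ∂ₜ²v -/
def ptt (v : ℝ × (Fin n → ℝ) → ℂ) (X : ℝ × (Fin n → ℝ)) : ℂ :=
  deriv (fun s => deriv (fun r => v (r, X.2)) s) X.1

/-- spatial directional derivative w·∇ₓv -/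
def dx (v : ℝ × (Fin n → ℝ) → ℂ) (X : ℝ × (Fin n → ℝ)) (w : Fin n → ℝ) : ℂ :=
  fderiv ℝ (fun z => v (X.1, z)) X.2 w

/-- spatial Laplacian Δₓv -/
def lapx (v : ℝ × (Fin n → ℝ) → ℂ) (X : ℝ × (Fin n → ℝ)) : ℂ :=
  ∑ i, fderiv ℝ (fun z => dx v (X.1, z) (Pi.single i 1)) X.2 (Pi.single i 1)

/-- wave operator □v = ∂ₜ²v − Δₓv -/
def waveOp (v : ℝ × (Fin n → ℝ) → ℂ) (X : ℝ × (Fin n → ℝ)) : ℂ :=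
  ptt v X - lapx v X

section DirDeriv

variable {V G : Type*} [NormedAddCommGroup V] [NormedSpace ℝ V]
  [NormedAddCommGroup G] [NormedSpace ℝ G]

noncomputable def dirDeriv (u : V) (f : V → G) (X : V) : G :=
  fderiv ℝ f X u

variable {f : V → G}

theorem dirDeriv_add_left (u v : V) (f : V → G) (X : V) :
    dirDeriv (u + v) f X = dirDeriv u f X + dirDeriv v f X :=
  map_add _ u v

theorem dirDeriv_smul_left (c : ℝ) (u : V) (f : V → G) (X : V) :
    dirDeriv (c • u) f X = c • dirDeriv u f X :=
  map_smul _ c u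

theorem ContDiff.dirDeriv {m n : WithTop ℕ∞} (hf : ContDiff ℝ n f) (hmn : m + 1 ≤ n) (u : V) :
    ContDiff ℝ m (_root_.dirDeriv u f) :=
  (hf.fderiv_right hmn).clm_apply contDiff_const

theorem ContDiff.continuous_dirDeriv (hf : ContDiff ℝ 1 f) (u : V) :
    Continuous (_root_.dirDeriv u f) :=
  (hf.dirDeriv (m := 0) (by norm_num) u).continuous

theorem dirDeriv_dirDeriv_comm (hf : ContDiff ℝ 2 f) (u v X : V) :
    dirDeriv u (dirDeriv v f) X = dirDeriv v (dirDeriv u f) X := by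
  have hf' : DifferentiableAt ℝ (fderiv ℝ f) X :=
    (hf.fderiv_right le_rfl).differentiable one_ne_zero X
  have h (a b : V) : dirDeriv a (dirDeriv b f) X = fderiv ℝ (fderiv ℝ f) X a b := by
    change fderiv ℝ (fun Y => fderiv ℝ f Y b) X a = _
    simp [fderiv_clm_apply hf' (differentiableAt_const b)]
  rw [h, h]
  exact (hf.contDiffAt.isSymmSndFDerivAt (by simp)) u v

theorem Set.EqOn.dirDeriv {U : Set V} (hU : IsOpen U) (h : EqOn f 0 U) (u : V) :
    EqOn (dirDeriv u f) 0 U := fun X hX => by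
  have : fderiv ℝ f X = 0 := by
    rw [(Filter.eventuallyEq_of_mem (hU.mem_nhds hX) h).fderiv_eq]; exact fderiv_const_apply _
  simp [_root_.dirDeriv, this]

end DirDeriv

section Slices

variable {E G : Type*} [NormedAddCommGroup E] [NormedSpace ℝ E]
  [NormedAddCommGroup G] [NormedSpace ℝ G] {φ : ℝ × E → G} {t : ℝ} {x : E}

theorem DifferentiableAt.hasDerivAt_time_slice (hφ : DifferentiableAt ℝ φ (t, x)) :
    HasDerivAt (fun s => φ (s, x)) (dirDeriv (1, 0) φ (t, x)) t :=
  hφ.hasFDerivAt.comp_hasDerivAt t ((hasDerivAt_id t).prodMk (hasDerivAt_const t x))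

theorem DifferentiableAt.fderiv_space_slice_apply (hφ : DifferentiableAt ℝ φ (t, x)) (v : E) :
    fderiv ℝ (fun y => φ (t, y)) x v = dirDeriv (0, v) φ (t, x) := by
  have h : HasFDerivAt (fun y => φ (t, y)) ((fderiv ℝ φ (t, x)).comp (.inr ℝ ℝ E)) x :=
    hφ.hasFDerivAt.comp x ((hasFDerivAt_const t x).prodMk (hasFDerivAt_id x))
  rw [h.fderiv]
  rfl

theorem DifferentiableAt.dirDeriv_zero_prod_eq_zero (hφ : DifferentiableAt ℝ φ (t, x))
    (h : ∀ y, φ (t, y) = 0) (v : E) : dirDeriv (0, v) φ (t, x) = 0 := by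
  rw [← hφ.fderiv_space_slice_apply, funext h]
  simp

end Slices

section Strip

variable {E G : Type*} [NormedAddCommGroup E] [NormedSpace ℝ E] [FiniteDimensional ℝ E]
  [MeasureSpace E] [(volume : Measure E).IsAddHaarMeasure]
  [NormedAddCommGroup G] {T : ℝ} {K : Set E} {φ : ℝ × E → G}

theorem integrableOn_strip_of_eqOn_zero [BorelSpace E] (hK : IsCompact K) (hφ : Continuous φ)
    (hvan : EqOn φ 0 (Ioo 0 T ×ˢ Kᶜ)) : IntegrableOn φ (Ioo 0 T ×ˢ univ) :=
  ((hφ.continuousOn.integrableOn_compact (isCompact_Icc.prod hK)).mono_set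
    (prod_mono Ioo_subset_Icc_self subset_rfl)).of_forall_sdiff_eq_zero
    (measurableSet_Ioo.prod MeasurableSet.univ)
    fun _ hX => hvan ⟨hX.1.1, fun hK => hX.2 ⟨hX.1.1, hK⟩⟩

variable [NormedSpace ℝ G]

theorem setIntegral_strip_eq_integral_integral (hφ : IntegrableOn φ (Ioo 0 T ×ˢ univ)) :
    ∫ X in Ioo 0 T ×ˢ univ, φ X = ∫ t in Ioo 0 T, ∫ x, φ (t, x) := by
  rw [Measure.volume_eq_prod] at hφ ⊢
  rw [setIntegral_prod _ hφ, Measure.restrict_univ]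

theorem setIntegral_strip_eq_integral_integral_swap (hφ : IntegrableOn φ (Ioo 0 T ×ˢ univ)) :
    ∫ X in Ioo 0 T ×ˢ univ, φ X = ∫ x, ∫ t in Ioo 0 T, φ (t, x) := by
  rw [Measure.volume_eq_prod, IntegrableOn, ← Measure.prod_restrict, Measure.restrict_univ] at hφ
  rw [Measure.volume_eq_prod, ← Measure.prod_restrict, Measure.restrict_univ,
    integral_prod_symm _ hφ]

variable [BorelSpace E]

theorem integrableOn_strip_dirDeriv (hK : IsCompact K) (hφ : ContDiff ℝ 1 φ)
    (hvan : EqOn φ 0 (Ioo 0 T ×ˢ Kᶜ)) (u : ℝ × E) :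
    IntegrableOn (dirDeriv u φ) (Ioo 0 T ×ˢ univ) :=
  integrableOn_strip_of_eqOn_zero hK (hφ.continuous_dirDeriv u)
    (hvan.dirDeriv (isOpen_Ioo.prod hK.isClosed.isOpen_compl) u)

theorem integral_fderiv_apply_eq_zero {f : E → G} (hf : ContDiff ℝ 1 f)
    (hfc : HasCompactSupport f) (v : E) : ∫ x, fderiv ℝ f x v = 0 := by
  have h := integral_smul_fderiv_eq_neg_fderiv_smul_of_integrable (μ := volume) (v := v)
    (f := fun _ : E => (1 : ℝ)) (g := f) (by simp)
    (by simpa using ((hf.continuous_fderiv one_ne_zero).clm_apply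
      continuous_const).integrable_of_hasCompactSupport (hfc.fderiv_apply ℝ v))
    (by simpa using hf.continuous.integrable_of_hasCompactSupport hfc)
    (fun _ _ => differentiableAt_const _) (fun x _ => hf.differentiable one_ne_zero x)
  simpa using h

theorem setIntegral_strip_dirDeriv_space (hK : IsCompact K) (hφ : ContDiff ℝ 1 φ)
    (hvan : EqOn φ 0 (Ioo 0 T ×ˢ Kᶜ)) (v : E) :
    ∫ X in Ioo 0 T ×ˢ univ, dirDeriv (0, v) φ X = 0 := by
  rw [setIntegral_strip_eq_integral_integral (integrableOn_strip_dirDeriv hK hφ hvan _)]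
  refine setIntegral_eq_zero_of_forall_eq_zero fun t ht => ?_
  simp_rw [← (hφ.differentiable one_ne_zero _).fderiv_space_slice_apply]
  exact integral_fderiv_apply_eq_zero (hφ.comp (by fun_prop))
    (HasCompactSupport.intro hK fun x hx => hvan (mk_mem_prod ht hx)) v

variable [CompleteSpace G]

theorem setIntegral_strip_dirDeriv_time (hT : 0 ≤ T) (hK : IsCompact K) (hφ : ContDiff ℝ 1 φ)
    (hvan : EqOn φ 0 (Ioo 0 T ×ˢ Kᶜ)) :
    ∫ X in Ioo 0 T ×ˢ univ, dirDeriv (1, 0) φ X = ∫ x, (φ (T, x) - φ (0, x)) := by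
  rw [setIntegral_strip_eq_integral_integral_swap (integrableOn_strip_dirDeriv hK hφ hvan _)]
  congr 1 with x
  rw [← integral_Ioc_eq_integral_Ioo, ← intervalIntegral.integral_of_le hT]
  exact intervalIntegral.integral_eq_sub_of_hasDerivAt
    (fun t _ => (hφ.differentiable one_ne_zero _).hasDerivAt_time_slice)
    (((hφ.continuous_dirDeriv _).comp (by fun_prop)).intervalIntegrable _ _)

theorem setIntegral_strip_dirDeriv (hT : 0 ≤ T) (hK : IsCompact K) (hφ : ContDiff ℝ 1 φ)
    (hvan : EqOn φ 0 (Ioo 0 T ×ˢ Kᶜ)) (u : ℝ × E) :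
    ∫ X in Ioo 0 T ×ˢ univ, dirDeriv u φ X = u.1 • ∫ x, (φ (T, x) - φ (0, x)) := by
  have hu (X : ℝ × E) : dirDeriv u φ X = u.1 • dirDeriv (1, 0) φ X + dirDeriv (0, u.2) φ X := by
    rw [← dirDeriv_smul_left, ← dirDeriv_add_left]; simp
  have ht : IntegrableOn (fun X => u.1 • dirDeriv (1, 0) φ X) (Ioo 0 T ×ˢ univ) :=
    (integrableOn_strip_dirDeriv hK hφ hvan _).smul _
  simp_rw [hu]
  rw [integral_add ht (integrableOn_strip_dirDeriv hK hφ hvan _), integral_smul,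
    setIntegral_strip_dirDeriv_time hT hK hφ hvan, setIntegral_strip_dirDeriv_space hK hφ hvan,
    add_zero]

end Strip

theorem setIntegral_prod_eq_setIntegral_strip {E G : Type*} [MeasureSpace E]
    [NormedAddCommGroup G] [NormedSpace ℝ G] {T : ℝ} {K Ω : Set E} (hKΩ : K ⊆ Ω)
    {ψ : ℝ × E → G} (hψ : EqOn ψ 0 (Ioo 0 T ×ˢ Kᶜ)) :
    ∫ X in Ioo 0 T ×ˢ Ω, ψ X = ∫ X in Ioo 0 T ×ˢ univ, ψ X :=
  (setIntegral_eq_of_subset_of_forall_sdiff_eq_zero (measurableSet_Ioo.prod .univ)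
    (prod_mono subset_rfl (subset_univ _))
    fun _ hX => hψ ⟨hX.1.1, fun hXK => hX.2 ⟨hX.1.1, hKΩ hXK⟩⟩).symm

open scoped RealInnerProductSpace

section Identities

variable {V F : Type*} [NormedAddCommGroup V] [NormedSpace ℝ V]
  [NormedAddCommGroup F] [InnerProductSpace ℝ F]

theorem dirDeriv_inner {g h : V → F} {X : V} (hg : DifferentiableAt ℝ g X)
    (hh : DifferentiableAt ℝ h X) (u : V) :
    dirDeriv u (fun Y => ⟪g Y, h Y⟫) X
      = ⟪dirDeriv u g X, h X⟫ + ⟪g X, dirDeriv u h X⟫ := by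
  rw [_root_.dirDeriv, fderiv_inner_apply ℝ hg hh, add_comm]; rfl

theorem inner_dirDeriv_dirDeriv_eq {w : V → F} (hw : ContDiff ℝ 2 w) (a b X : V) :
    ⟪dirDeriv a (dirDeriv a w) X, dirDeriv b w X⟫
      = dirDeriv a (fun Y => ⟪dirDeriv a w Y, dirDeriv b w Y⟫) X
        - dirDeriv b (fun Y => ‖dirDeriv a w Y‖ ^ 2) X / 2 := by
  have hd (u : V) : Differentiable ℝ (dirDeriv u w) :=
    (hw.dirDeriv (m := 1) (by norm_num) u).differentiable one_ne_zero
  simp_rw [← real_inner_self_eq_norm_sq]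
  rw [dirDeriv_inner (hd a X) (hd b X), dirDeriv_inner (hd a X) (hd a X),
    dirDeriv_dirDeriv_comm hw b a, real_inner_comm (dirDeriv a w X)]
  ring

theorem dirDeriv_fst_mul_norm_sq {E : Type*} [NormedAddCommGroup E] [NormedSpace ℝ E]
    {w : ℝ × E → F} {X : ℝ × E} (hw : DifferentiableAt ℝ w X) (u : ℝ × E) :
    dirDeriv u (fun Y => Y.1 * ‖w Y‖ ^ 2) X
      = u.1 * ‖w X‖ ^ 2 + 2 * X.1 * ⟪w X, dirDeriv u w X⟫ := by
  have h : HasFDerivAt (fun Y : ℝ × E => Y.1 * ‖w Y‖ ^ 2) _ X :=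
    hasFDerivAt_fst.mul hw.hasFDerivAt.norm_sq
  rw [dirDeriv, h.fderiv]
  simp only [dirDeriv, add_apply, smul_apply, ContinuousLinearMap.comp_apply, coe_innerSL_apply,
    ContinuousLinearMap.coe_fst', nsmul_eq_mul, smul_eq_mul]
  ring

theorem integral_norm_add_smul_sq {α : Type*} [MeasurableSpace α] {μ : Measure α} {a b : α → F}
    (ha : Integrable (fun x => ‖a x‖ ^ 2) μ) (hab : Integrable (fun x => ⟪a x, b x⟫) μ)
    (hb : Integrable (fun x => ‖b x‖ ^ 2) μ) (c : ℝ) :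
    ∫ x, ‖a x + c • b x‖ ^ 2 ∂μ
      = ∫ x, ‖a x‖ ^ 2 ∂μ + 2 * c * ∫ x, ⟪a x, b x⟫ ∂μ + c ^ 2 * ∫ x, ‖b x‖ ^ 2 ∂μ := by
  have hexp (x : α) : ‖a x + c • b x‖ ^ 2
      = ‖a x‖ ^ 2 + 2 * c * ⟪a x, b x⟫ + c ^ 2 * ‖b x‖ ^ 2 := by
    rw [norm_add_sq_real, norm_smul, inner_smul_right, mul_pow, Real.norm_eq_abs, sq_abs]
    ring
  have hsum : Integrable (fun x => ‖a x‖ ^ 2 + 2 * c * ⟪a x, b x⟫) μ := ha.add (hab.const_mul _)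
  simp_rw [hexp]
  rw [integral_add hsum (hb.const_mul _), integral_add ha (hab.const_mul _), integral_const_mul,
    integral_const_mul]

end Identities

section WaveOp

variable {E F ι : Type*} [NormedAddCommGroup E] [NormedSpace ℝ E]
  [NormedAddCommGroup F] [NormedSpace ℝ F] [Fintype ι] {w : ℝ × E → F}

/-- The wave operator when `v` is an orthonormal basis of `E`. -/
noncomputable def waveOpWith (v : ι → E) (w : ℝ × E → F) (X : ℝ × E) : F :=
  dirDeriv (1, 0) (dirDeriv (1, 0) w) X - ∑ i, dirDeriv (0, v i) (dirDeriv (0, v i) w) X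

theorem ContDiff.continuous_waveOpWith (hw : ContDiff ℝ 2 w) (v : ι → E) :
    Continuous (waveOpWith v w) := by
  have h (u : ℝ × E) : Continuous (_root_.dirDeriv u (_root_.dirDeriv u w)) :=
    (hw.dirDeriv (m := 1) (by norm_num) u).continuous_dirDeriv u
  exact (h _).sub (continuous_finsetSum _ fun i _ => h _)

theorem Set.EqOn.waveOpWith {U : Set (ℝ × E)} (hU : IsOpen U) (h : EqOn w 0 U) (v : ι → E) :
    EqOn (_root_.waveOpWith v w) 0 U := fun X hX => by
  have h2 (u : ℝ × E) : _root_.dirDeriv u (_root_.dirDeriv u w) X = 0 :=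
    (h.dirDeriv hU u).dirDeriv hU u hX
  simp [_root_.waveOpWith, h2]

end WaveOp

section Energy

variable {E F : Type*} [NormedAddCommGroup E] [NormedSpace ℝ E] [FiniteDimensional ℝ E]
  [MeasureSpace E] [BorelSpace E] [(volume : Measure E).IsAddHaarMeasure]
  [NormedAddCommGroup F] [InnerProductSpace ℝ F] {T : ℝ} {K : Set E} {w : ℝ × E → F}

theorem setIntegral_strip_inner_dirDeriv_dirDeriv (hT : 0 ≤ T) (hK : IsCompact K)
    (hw : ContDiff ℝ 2 w) (hvan : EqOn w 0 (Ioo 0 T ×ˢ Kᶜ)) (a b : ℝ × E) :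
    ∫ X in Ioo 0 T ×ˢ univ, ⟪dirDeriv a (dirDeriv a w) X, dirDeriv b w X⟫
      = a.1 * (∫ x, (⟪dirDeriv a w (T, x), dirDeriv b w (T, x)⟫
          - ⟪dirDeriv a w (0, x), dirDeriv b w (0, x)⟫))
        - b.1 * (∫ x, (‖dirDeriv a w (T, x)‖ ^ 2 - ‖dirDeriv a w (0, x)‖ ^ 2)) / 2 := by
  have hU : IsOpen (Ioo 0 T ×ˢ Kᶜ) := isOpen_Ioo.prod hK.isClosed.isOpen_compl
  have hd (u : ℝ × E) : ContDiff ℝ 1 (dirDeriv u w) := hw.dirDeriv (by norm_num) u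
  have hφ : ContDiff ℝ 1 fun Y => ⟪dirDeriv a w Y, dirDeriv b w Y⟫ := (hd a).inner ℝ (hd b)
  have hψ : ContDiff ℝ 1 fun Y => ‖dirDeriv a w Y‖ ^ 2 := (hd a).norm_sq ℝ
  have hφvan : EqOn (fun Y => ⟪dirDeriv a w Y, dirDeriv b w Y⟫) 0 (Ioo 0 T ×ˢ Kᶜ) :=
    fun X hX => by simp [hvan.dirDeriv hU a hX]
  have hψvan : EqOn (fun Y => ‖dirDeriv a w Y‖ ^ 2) 0 (Ioo 0 T ×ˢ Kᶜ) :=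
    fun X hX => by simp [hvan.dirDeriv hU a hX]
  simp_rw [inner_dirDeriv_dirDeriv_eq hw]
  rw [integral_sub (integrableOn_strip_dirDeriv hK hφ hφvan a)
      ((integrableOn_strip_dirDeriv hK hψ hψvan b).div_const 2), integral_div,
    setIntegral_strip_dirDeriv hT hK hφ hφvan, setIntegral_strip_dirDeriv hT hK hψ hψvan,
    smul_eq_mul, smul_eq_mul]

theorem setIntegral_strip_inner_waveOpWith_dirDeriv (hT : 0 ≤ T) (hK : IsCompact K)
    (hw : ContDiff ℝ 2 w) (hvan : EqOn w 0 (Ioo 0 T ×ˢ Kᶜ)) (h0 : ∀ x, w (0, x) = 0)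
    (ht0 : ∀ x, dirDeriv (1, 0) w (0, x) = 0) (hTx : ∀ x, w (T, x) = 0)
    {ι : Type*} [Fintype ι] (v : ι → E) (ω : E) :
    ∫ X in Ioo 0 T ×ˢ univ, ⟪waveOpWith v w X, dirDeriv (1, ω) w X⟫
      = (∫ x, ‖dirDeriv (1, 0) w (T, x)‖ ^ 2) / 2 := by
  have hU : IsOpen (Ioo 0 T ×ˢ Kᶜ) := isOpen_Ioo.prod hK.isClosed.isOpen_compl
  have hwd : Differentiable ℝ w := hw.differentiable (by norm_num)
  have hx0 (x u : E) : dirDeriv (0, u) w (0, x) = 0 := (hwd _).dirDeriv_zero_prod_eq_zero h0 u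
  have hxT (x u : E) : dirDeriv (0, u) w (T, x) = 0 := (hwd _).dirDeriv_zero_prod_eq_zero hTx u
  have hm (X : ℝ × E) : dirDeriv (1, ω) w X = dirDeriv (1, 0) w X + dirDeriv (0, ω) w X := by
    rw [← dirDeriv_add_left]; simp
  have hint (a : ℝ × E) :
      IntegrableOn (fun X => ⟪dirDeriv a (dirDeriv a w) X, dirDeriv (1, ω) w X⟫)
        (Ioo 0 T ×ˢ univ) :=
    integrableOn_strip_of_eqOn_zero hK
      (((hw.dirDeriv (m := 1) (by norm_num) a).continuous_dirDeriv a).inner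
        ((hw.dirDeriv (m := 1) (by norm_num) _).continuous))
      fun X hX => by simp [hvan.dirDeriv hU _ hX]
  simp only [waveOpWith, inner_sub_left, sum_inner]
  rw [integral_sub (hint _) (integrable_finsetSum _ fun i _ => hint _),
    integral_finsetSum _ fun i _ => hint _]
  simp only [setIntegral_strip_inner_dirDeriv_dirDeriv hT hK hw hvan]
  simp only [hm, hx0, hxT, ht0, add_zero, real_inner_self_eq_norm_sq, inner_zero_left, norm_zero,
    zero_pow two_ne_zero, sub_self, sub_zero, integral_zero, mul_zero, zero_div,
    Finset.sum_const_zero]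
  ring

theorem setIntegral_strip_norm_sq_le (hT : 0 ≤ T) (hK : IsCompact K) (hw : ContDiff ℝ 1 w)
    (hvan : EqOn w 0 (Ioo 0 T ×ˢ Kᶜ)) (hTx : ∀ x, w (T, x) = 0) (ω : E) :
    ∫ X in Ioo 0 T ×ˢ univ, ‖w X‖ ^ 2
      ≤ 4 * T ^ 2 * ∫ X in Ioo 0 T ×ˢ univ, ‖dirDeriv (1, ω) w X‖ ^ 2 := by
  have hU : IsOpen (Ioo 0 T ×ˢ Kᶜ) := isOpen_Ioo.prod hK.isClosed.isOpen_compl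
  have hS : MeasurableSet (Ioo 0 T ×ˢ (univ : Set E)) := measurableSet_Ioo.prod .univ
  have hφ : ContDiff ℝ 1 fun Y : ℝ × E => Y.1 * ‖w Y‖ ^ 2 := contDiff_fst.mul (hw.norm_sq ℝ)
  have hφvan : EqOn (fun Y : ℝ × E => Y.1 * ‖w Y‖ ^ 2) 0 (Ioo 0 T ×ˢ Kᶜ) :=
    fun X hX => by simp [hvan hX]
  have hw2 : IntegrableOn (fun X => ‖w X‖ ^ 2) (Ioo 0 T ×ˢ univ) :=
    integrableOn_strip_of_eqOn_zero hK (hw.continuous.norm.pow 2) fun X hX => by simp [hvan hX]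
  have hdw2 : IntegrableOn (fun X => ‖dirDeriv (1, ω) w X‖ ^ 2) (Ioo 0 T ×ˢ univ) :=
    integrableOn_strip_of_eqOn_zero hK ((hw.continuous_dirDeriv _).norm.pow 2)
      fun X hX => by simp [hvan.dirDeriv hU _ hX]
  have hzero : ∫ X in Ioo 0 T ×ˢ univ, dirDeriv (1, ω) (fun Y => Y.1 * ‖w Y‖ ^ 2) X = 0 := by
    rw [setIntegral_strip_dirDeriv hT hK hφ hφvan]
    simp [hTx]
  have hle : ∫ X in Ioo 0 T ×ˢ univ, (‖w X‖ ^ 2 / 2 - 2 * T ^ 2 * ‖dirDeriv (1, ω) w X‖ ^ 2)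
      ≤ ∫ X in Ioo 0 T ×ˢ univ, dirDeriv (1, ω) (fun Y => Y.1 * ‖w Y‖ ^ 2) X := by
    refine setIntegral_mono_on ((hw2.div_const 2).sub (hdw2.const_mul _))
      (integrableOn_strip_dirDeriv hK hφ hφvan _) hS fun X hX => ?_
    rw [dirDeriv_fst_mul_norm_sq (hw.differentiable one_ne_zero X)]
    have ht : 0 < X.1 ∧ X.1 < T := hX.1
    have hneg := neg_abs_le ⟪w X, dirDeriv (1, ω) w X⟫
    have hCS := abs_real_inner_le_norm (w X) (dirDeriv (1, ω) w X)
    nlinarith [sq_nonneg (‖w X‖ - 2 * X.1 * ‖dirDeriv (1, ω) w X‖),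
      mul_nonneg (sq_nonneg ‖dirDeriv (1, ω) w X‖)
        (mul_pos (sub_pos.2 ht.2) (add_pos ht.1 (ht.1.trans ht.2))).le]
  rw [hzero, integral_sub (hw2.div_const 2) (hdw2.const_mul _), integral_div,
    integral_const_mul] at hle
  linarith

theorem setIntegral_strip_norm_sq_waveOpWith_add_le (hT : 0 < T) (hK : IsCompact K)
    (hw : ContDiff ℝ 2 w) (hvan : EqOn w 0 (Ioo 0 T ×ˢ Kᶜ)) (h0 : ∀ x, w (0, x) = 0)
    (ht0 : ∀ x, dirDeriv (1, 0) w (0, x) = 0) (hTx : ∀ x, w (T, x) = 0)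
    {ι : Type*} [Fintype ι] (v : ι → E) (ω : E) {lam : ℝ} (hlam : 0 ≤ lam) :
    (∫ X in Ioo 0 T ×ˢ univ, ‖waveOpWith v w X‖ ^ 2)
        + 1 / T ^ 2 * lam ^ 2 * ∫ X in Ioo 0 T ×ˢ univ, ‖w X‖ ^ 2
      ≤ ∫ X in Ioo 0 T ×ˢ univ, ‖waveOpWith v w X + (2 * lam) • dirDeriv (1, ω) w X‖ ^ 2 := by
  have hU : IsOpen (Ioo 0 T ×ˢ Kᶜ) := isOpen_Ioo.prod hK.isClosed.isOpen_compl
  have hP := setIntegral_strip_norm_sq_le hT.le hK (hw.of_le (by norm_num)) hvan hTx ω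
  have hcross := setIntegral_strip_inner_waveOpWith_dirDeriv hT.le hK hw hvan h0 ht0 hTx v ω
  have hWc := hw.continuous_waveOpWith v
  have hWvan := hvan.waveOpWith hU v
  have hDc : Continuous (dirDeriv (1, ω) w) := (hw.of_le (by norm_num)).continuous_dirDeriv _
  have hDvan := hvan.dirDeriv hU (1, ω)
  have hW2 : IntegrableOn (fun X => ‖waveOpWith v w X‖ ^ 2) (Ioo 0 T ×ˢ univ) :=
    integrableOn_strip_of_eqOn_zero hK (hWc.norm.pow 2) fun X hX => by simp [hWvan hX]
  have hWD :
      IntegrableOn (fun X => ⟪waveOpWith v w X, dirDeriv (1, ω) w X⟫) (Ioo 0 T ×ˢ univ) :=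
    integrableOn_strip_of_eqOn_zero hK (hWc.inner hDc) fun X hX => by simp [hWvan hX]
  have hD2 : IntegrableOn (fun X => ‖dirDeriv (1, ω) w X‖ ^ 2) (Ioo 0 T ×ˢ univ) :=
    integrableOn_strip_of_eqOn_zero hK (hDc.norm.pow 2) fun X hX => by simp [hDvan hX]
  rw [integral_norm_add_smul_sq hW2 hWD hD2, hcross]
  have hbdry : 0 ≤ ∫ x, ‖dirDeriv (1, 0) w (T, x)‖ ^ 2 := integral_nonneg fun _ => by positivity
  calc (∫ X in Ioo 0 T ×ˢ univ, ‖waveOpWith v w X‖ ^ 2)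
          + 1 / T ^ 2 * lam ^ 2 * ∫ X in Ioo 0 T ×ˢ univ, ‖w X‖ ^ 2
      ≤ (∫ X in Ioo 0 T ×ˢ univ, ‖waveOpWith v w X‖ ^ 2)
          + 1 / T ^ 2 * lam ^ 2
            * (4 * T ^ 2 * ∫ X in Ioo 0 T ×ˢ univ, ‖dirDeriv (1, ω) w X‖ ^ 2) := by
        gcongr
    _ = (∫ X in Ioo 0 T ×ˢ univ, ‖waveOpWith v w X‖ ^ 2)
          + (2 * lam) ^ 2 * ∫ X in Ioo 0 T ×ˢ univ, ‖dirDeriv (1, ω) w X‖ ^ 2 := by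
        field_simp
        ring
    _ ≤ _ := by nlinarith [mul_nonneg hlam hbdry]

end Energy

section Coordinates

variable {w : ℝ × (Fin n → ℝ) → ℂ}

theorem pt_eq_dirDeriv {X : ℝ × (Fin n → ℝ)} (hw : DifferentiableAt ℝ w X) :
    pt w X = dirDeriv (1, 0) w X :=
  hw.hasDerivAt_time_slice.deriv

theorem pt_add_dx_eq_dirDeriv {X : ℝ × (Fin n → ℝ)} (hw : DifferentiableAt ℝ w X)
    (ω : Fin n → ℝ) : pt w X + dx w X ω = dirDeriv (1, ω) w X := by
  rw [pt_eq_dirDeriv hw, dx, hw.fderiv_space_slice_apply, ← dirDeriv_add_left]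
  simp

theorem waveOp_eq_waveOpWith (hw : ContDiff ℝ 2 w) (X : ℝ × (Fin n → ℝ)) :
    waveOp w X = waveOpWith (fun i => Pi.single i 1) w X := by
  obtain ⟨t, x⟩ := X
  have hd : Differentiable ℝ w := hw.differentiable (by norm_num)
  have hdd (u : ℝ × (Fin n → ℝ)) : Differentiable ℝ (dirDeriv u w) :=
    (hw.dirDeriv (m := 1) (by norm_num) u).differentiable one_ne_zero
  have hpt : (fun s => deriv (fun r => w (r, x)) s) = fun s => dirDeriv (1, 0) w (s, x) :=
    funext fun s => pt_eq_dirDeriv (hd (s, x))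
  have hdx (i : Fin n) : (fun z => dx w (t, z) (Pi.single i 1))
      = fun z => dirDeriv (0, Pi.single i 1) w (t, z) :=
    funext fun z => (hd (t, z)).fderiv_space_slice_apply _
  simp only [waveOp, ptt, lapx, hpt, hdx, (hdd _ _).fderiv_space_slice_apply, waveOpWith]
  rw [(hdd _ _).hasDerivAt_time_slice.deriv]

end Coordinates

theorem carleman_lower_bound_general
    (n : ℕ) (Ω : Set (Fin n → ℝ)) (T : ℝ) (hT : 0 < T)
    (ω : Fin n → ℝ) :
    ∃ c > (0 : ℝ), ∃ lam₀ > (0 : ℝ), ∀ lam > lam₀,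
      ∀ w : ℝ × (Fin n → ℝ) → ℂ,
        ContDiff ℝ 2 w →
        (∀ t : ℝ, ContDiff ℝ (⊤ : ℕ∞) (fun x => w (t, x))) →
        (∃ K : Set (Fin n → ℝ), IsCompact K ∧ K ⊆ Ω ∧
          ∀ t ∈ Set.Icc (0 : ℝ) T, {x | w (t, x) ≠ 0} ⊆ K) →
        (∀ x : Fin n → ℝ, w (0, x) = 0) →
        (∀ x : Fin n → ℝ, pt w (0, x) = 0) →
        (∀ x : Fin n → ℝ, w (T, x) = 0) →
        (∫ X in Set.Ioo (0 : ℝ) T ×ˢ Ω, ‖waveOp w X‖ ^ 2) +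
            c * lam ^ 2 * ∫ X in Set.Ioo (0 : ℝ) T ×ˢ Ω, ‖w X‖ ^ 2 ≤
          ∫ X in Set.Ioo (0 : ℝ) T ×ˢ Ω,
            ‖waveOp w X + ((2 * lam : ℝ) : ℂ) * (pt w X + dx w X ω)‖ ^ 2 := by
  refine ⟨1 / T ^ 2, by positivity, 1, one_pos, fun lam hlam w hw _ hsupp h0 ht0 hTx => ?_⟩
  obtain ⟨K, hK, hKΩ, hKw⟩ := hsupp
  have hwd : Differentiable ℝ w := hw.differentiable (by norm_num)
  have hvan : EqOn w 0 (Ioo 0 T ×ˢ Kᶜ) := fun X hX =>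
    not_not.1 fun hne => hX.2 (hKw X.1 (Ioo_subset_Icc_self hX.1) hne)
  have hU : IsOpen (Ioo 0 T ×ˢ Kᶜ) := isOpen_Ioo.prod hK.isClosed.isOpen_compl
  have hWvan := hvan.waveOpWith hU (fun i => Pi.single i 1)
  have hDvan := hvan.dirDeriv hU (1, ω)
  simp only [waveOp_eq_waveOpWith hw, pt_add_dx_eq_dirDeriv (hwd _), ← Complex.real_smul]
  rw [setIntegral_prod_eq_setIntegral_strip hKΩ fun X hX => by simp [hWvan hX],
    setIntegral_prod_eq_setIntegral_strip hKΩ fun X hX => by simp [hvan hX],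
    setIntegral_prod_eq_setIntegral_strip hKΩ fun X hX => by simp [hWvan hX, hDvan hX]]
  exact setIntegral_strip_norm_sq_waveOpWith_add_le hT hK hw hvan h0
    (fun x => pt_eq_dirDeriv (hwd _) ▸ ht0 x) hTx _ ω (by linarith)

/-- Lower bound for the conjugated operator with weight e^{λ(t−x·ω)} acting on
w ∈ C²([0,T];C_c^∞(Ω)) with w(0,·) = ∂ₜw(0,·) = w(T,·) = 0:
∫_Q |□w + 2λ(∂ₜw + ω·∇ₓw)|² ≥ ∫_Q |□w|² + cλ²∫_Q |w|². -/
theorem carleman_lower_bound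
    (n : ℕ) (hn : 2 ≤ n) (Ω : Set (Fin n → ℝ)) (hΩo : IsOpen Ω)
    (hΩb : Bornology.IsBounded Ω) (T : ℝ) (hT : 0 < T)
    (ω : Fin n → ℝ) (hω : ∑ i, ω i ^ 2 = 1) :
    ∃ c > (0 : ℝ), ∃ lam₀ > (0 : ℝ), ∀ lam > lam₀,
      ∀ w : ℝ × (Fin n → ℝ) → ℂ,
        ContDiff ℝ 2 w →
        (∀ t : ℝ, ContDiff ℝ (⊤ : ℕ∞) (fun x => w (t, x))) →
        (∃ K : Set (Fin n → ℝ), IsCompact K ∧ K ⊆ Ω ∧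
          ∀ t ∈ Set.Icc (0 : ℝ) T, {x | w (t, x) ≠ 0} ⊆ K) →
        (∀ x : Fin n → ℝ, w (0, x) = 0) →
        (∀ x : Fin n → ℝ, pt w (0, x) = 0) →
        (∀ x : Fin n → ℝ, w (T, x) = 0) →
        (∫ X in Set.Ioo (0 : ℝ) T ×ˢ Ω, ‖waveOp w X‖ ^ 2) +
            c * lam ^ 2 * ∫ X in Set.Ioo (0 : ℝ) T ×ˢ Ω, ‖w X‖ ^ 2 ≤
          ∫ X in Set.Ioo (0 : ℝ) T ×ˢ Ω,
            ‖waveOp w X + ((2 * lam : ℝ) : ℂ) * (pt w X + dx w X ω)‖ ^ 2 :=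
  carleman_lower_bound_general n Ω T hT ω
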